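/- Let b ∈ (0,∞], L ≥ 0, α ≥ 0 with L + α > 0, and β > 0, g, u ∈ ℝ. Then u is a fixed point of the constrained hard-thresholding step, i.e., u ∈ H_{β/(L+α), b}((L·u - g)/(L+α)), if and only if (u, g) satisfies the conditions defining H^FP_{α,β,L,b}: setting s := β/(L+α), either |u| = b with appropriate sign condition on g (u = -b requires g ≥ (L+α)max(b, b/2+s/b) - Lb, symmetrically for u = b), or u = 0 with |g| ≤ (L+α)(b/2+s/b) when b ≤ √(2s) and |g| ≤ (L+α)√(2s) when b ≥ √(2s), or 0 < |u| < b with αu = -g and |q| ∈ [√(2s), b] where q = -(Lu - g)/(L+α). -/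

import Mathlib

/-!
Since `-q v + v²/2 = (v - q)²/2 - q²/2`, away from `0` the objective is a shifted parabola with
vertex `q`. A nonzero minimizer in the interior of `[-b, b]` is therefore a critical point, i.e.
`u = q`, and it beats `v = 0` exactly when `q² ≥ 2s`; a minimizer at the endpoint `b` must be the
point of `[-b, b]` closest to `q` and beat `0`, which gives `q ≥ max b (b/2 + s/b)` (and `-b` is the
mirror image); and `0` is a minimizer iff `|q| t ≤ t²/2 + s` for all `t ∈ (0, b]`. For the step
`q = (Lu - g)/(L + α)` the fixed-point equation `u = q` reads `αu = -g`.
-/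

open scoped ENNReal

/-- The "L⁰ norm" of a real number: 0 if `u = 0`, else 1. -/
noncomputable def nrm0 (u : ℝ) : ℝ := if u = 0 then 0 else 1

/-- `H_{s,b}(q)` with bound `b ∈ (0,∞]`: the set of global minimizers of
`v ↦ -q·v + v²/2 + s·|v|₀` over `{v : |v| ≤ b}`. -/
def Hsb (s : ℝ) (b : ℝ≥0∞) (q : ℝ) : Set ℝ :=
  {u | ENNReal.ofReal |u| ≤ b ∧ ∀ v : ℝ, ENNReal.ofReal |v| ≤ b →
        -q * u + u ^ 2 / 2 + s * nrm0 u ≤ -q * v + v ^ 2 / 2 + s * nrm0 v}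

open Set Filter Topology

noncomputable def hardThresholdObjective (s q v : ℝ) : ℝ := -q * v + v ^ 2 / 2 + s * nrm0 v

lemma mem_Hsb_iff {s q u : ℝ} {b : ℝ≥0∞} :
    u ∈ Hsb s b q ↔ u ∈ {v | ENNReal.ofReal |v| ≤ b} ∧
      IsMinOn (hardThresholdObjective s q) {v | ENNReal.ofReal |v| ≤ b} u :=
  Iff.rfl

lemma setOf_ofReal_abs_le_top : {v : ℝ | ENNReal.ofReal |v| ≤ ∞} = univ := by simp

lemma setOf_ofReal_abs_le_of_ne_top {b : ℝ≥0∞} (hb : b ≠ ∞) :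
    {v : ℝ | ENNReal.ofReal |v| ≤ b} = Icc (-b.toReal) b.toReal := by
  ext v; simp [ENNReal.ofReal_le_iff_le_toReal hb, abs_le]

lemma abs_le_sqrt_two_mul_iff {s q : ℝ} (hs : 0 ≤ s) : |q| ≤ √(2 * s) ↔ q ^ 2 ≤ 2 * s := by
  rw [Real.le_sqrt (abs_nonneg q) (by positivity), sq_abs]

lemma sqrt_two_mul_le_abs_iff {s q : ℝ} : √(2 * s) ≤ |q| ↔ 2 * s ≤ q ^ 2 := by
  rw [← Real.sqrt_sq_eq_abs, Real.sqrt_le_sqrt_iff (sq_nonneg q)]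

namespace hardThresholdObjective

variable {s q u : ℝ} {K : Set ℝ}

lemma apply_zero : hardThresholdObjective s q 0 = 0 := by
  simp [hardThresholdObjective, nrm0]

lemma apply_of_ne_zero (hu : u ≠ 0) : hardThresholdObjective s q u = -q * u + u ^ 2 / 2 + s := by
  simp [hardThresholdObjective, nrm0, hu]

lemma apply_neg : hardThresholdObjective s q (-u) = hardThresholdObjective s (-q) u := by
  simp [hardThresholdObjective, nrm0]

lemma isMinOn_zero_iff :
    IsMinOn (hardThresholdObjective s q) K 0 ↔ ∀ v ∈ K, v ≠ 0 → q * v ≤ v ^ 2 / 2 + s := by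
  refine isMinOn_iff.trans (forall₂_congr fun v _ => ?_)
  rcases eq_or_ne v 0 with rfl | hv
  · simp
  · rw [apply_zero, apply_of_ne_zero hv]
    constructor
    · intro h _; linarith
    · intro h; linarith [h hv]

lemma isMinOn_univ_zero_iff (hs : 0 ≤ s) :
    IsMinOn (hardThresholdObjective s q) univ 0 ↔ q ^ 2 ≤ 2 * s := by
  rw [isMinOn_zero_iff]
  constructor
  · intro h
    rcases eq_or_ne q 0 with rfl | hq
    · simpa using hs
    · linarith [h q (mem_univ q) hq]
  · intro h v _ _
    nlinarith [sq_nonneg (v - q)]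

lemma eq_of_isMinOn (hu : u ≠ 0) (hK : K ∈ 𝓝 u) (h : IsMinOn (hardThresholdObjective s q) K u) :
    u = q := by
  have hloc : IsLocalMin (fun v => -q * v + v ^ 2 / 2 + s) u :=
    (h.isLocalMin hK).congr ((eventually_ne_nhds hu).mono fun v hv => apply_of_ne_zero hv)
  have hderiv := (((hasDerivAt_id' u).const_mul (-q)).add
    ((hasDerivAt_pow 2 u).div_const 2)).add_const s
  have := hloc.hasDerivAt_eq_zero hderiv
  norm_num at this
  linarith

lemma isMinOn_univ_self (hq : q ≠ 0) (h : 2 * s ≤ q ^ 2) :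
    IsMinOn (hardThresholdObjective s q) univ q := by
  refine isMinOn_iff.mpr fun v _ => ?_
  rw [apply_of_ne_zero hq]
  rcases eq_or_ne v 0 with rfl | hv
  · rw [apply_zero]; linarith
  · rw [apply_of_ne_zero hv]; nlinarith [sq_nonneg (v - q)]

lemma isMinOn_iff_of_ne_zero (hu : u ≠ 0) (hK : K ∈ 𝓝 u) (h0 : (0 : ℝ) ∈ K) :
    IsMinOn (hardThresholdObjective s q) K u ↔ u = q ∧ 2 * s ≤ q ^ 2 := by
  constructor
  · intro h
    obtain rfl := eq_of_isMinOn hu hK h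
    have h_le_zero := isMinOn_iff.mp h 0 h0
    simp only [apply_zero, apply_of_ne_zero hu] at h_le_zero
    exact ⟨rfl, by linarith⟩
  · rintro ⟨rfl, h⟩
    exact (isMinOn_univ_self hu h).on_subset (subset_univ K)

lemma isMinOn_univ_iff (hs : 0 ≤ s) :
    IsMinOn (hardThresholdObjective s q) univ u ↔
      (u = 0 ∧ |q| ≤ √(2 * s)) ∨ (u ≠ 0 ∧ u = q ∧ √(2 * s) ≤ |q|) := by
  rcases eq_or_ne u 0 with rfl | hu
  · simp only [isMinOn_univ_zero_iff hs, abs_le_sqrt_two_mul_iff hs, true_and, ne_eq,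
      not_true_eq_false, false_and, or_false]
  · simp only [isMinOn_iff_of_ne_zero hu univ_mem (mem_univ 0), sqrt_two_mul_le_abs_iff, hu,
      false_and, false_or, ne_eq, not_false_eq_true, true_and]

variable {B : ℝ}

lemma isMinOn_Icc_zero_iff (hs : 0 ≤ s) (hB : 0 < B) :
    IsMinOn (hardThresholdObjective s q) (Icc (-B) B) 0 ↔
      (B ≤ √(2 * s) ∧ |q| ≤ B / 2 + s / B) ∨ (√(2 * s) ≤ B ∧ |q| ≤ √(2 * s)) := by
  have hsqrt : √(2 * s) ^ 2 = 2 * s := Real.sq_sqrt (by positivity)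
  have hsqrt0 : 0 ≤ √(2 * s) := Real.sqrt_nonneg _
  have hdiv : |q| ≤ B / 2 + s / B ↔ |q| * B ≤ B ^ 2 / 2 + s := by
    rw [← le_div_iff₀ hB]; field_simp
  rw [isMinOn_zero_iff, hdiv]
  constructor
  · intro h
    have h_endpoint : |q| * B ≤ B ^ 2 / 2 + s := by
      rw [← abs_of_pos hB, ← abs_mul, abs_of_pos hB, abs_le]
      constructor
      · linarith [h (-B) ⟨le_rfl, by linarith⟩ (by linarith)]
      · linarith [h B ⟨by linarith, le_rfl⟩ hB.ne']
    have h_interior : |q| ≤ B → q ^ 2 ≤ 2 * s := fun hqB => by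
      rcases eq_or_ne q 0 with rfl | hq
      · simpa using hs
      · linarith [h q (abs_le.mp hqB) hq]
    by_cases hBs : B ≤ √(2 * s)
    · exact Or.inl ⟨hBs, h_endpoint⟩
    · have hqB : |q| ≤ B := by
        by_contra! hqB
        nlinarith [mul_lt_mul_of_pos_right hqB hB]
      exact Or.inr ⟨le_of_not_ge hBs, (abs_le_sqrt_two_mul_iff hs).mpr (h_interior hqB)⟩
  · intro h v hv hv0
    have hqv : q * v ≤ |q| * |v| := (le_abs_self _).trans (abs_mul q v).le
    have hvB : |v| ≤ B := abs_le.mpr hv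
    have hv_pos : 0 < |v| := abs_pos.mpr hv0
    rw [← sq_abs v]
    rcases h with ⟨hBs, hq⟩ | ⟨-, hq⟩
    · -- `|q| t - t²/2` is increasing on `[0, B] ⊆ [0, √(2s)]`, so its worst case is `t = B`.
      have hBv : B * |v| ≤ 2 * s := by nlinarith
      nlinarith [mul_nonneg (sub_nonneg.mpr hvB) (sub_nonneg.mpr hBv),
        mul_le_mul_of_nonneg_right hq hv_pos.le]
    · nlinarith [mul_le_mul_of_nonneg_right hq hv_pos.le, sq_nonneg (|v| - √(2 * s))]

lemma isMinOn_Icc_right_iff (hs : 0 ≤ s) (hB : 0 < B) :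
    IsMinOn (hardThresholdObjective s q) (Icc (-B) B) B ↔ max B (B / 2 + s / B) ≤ q := by
  have hdiv : B / 2 + s / B ≤ q ↔ B ^ 2 / 2 + s ≤ q * B := by
    rw [← div_le_iff₀ hB]; field_simp
  rw [max_le_iff, hdiv, isMinOn_iff]
  constructor
  · intro h
    have h_zero := h 0 ⟨by linarith, hB.le⟩
    rw [apply_zero, apply_of_ne_zero hB.ne'] at h_zero
    refine ⟨?_, by linarith⟩
    by_contra! hqB
    have hq : 0 < q := by nlinarith
    have h_q := h q ⟨by linarith, hqB.le⟩
    rw [apply_of_ne_zero hB.ne', apply_of_ne_zero hq.ne'] at h_q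
    nlinarith [mul_pos (sub_pos.mpr hqB) (sub_pos.mpr hqB)]
  · rintro ⟨hqB, hqs⟩ v ⟨hv₁, hv₂⟩
    rw [apply_of_ne_zero hB.ne']
    rcases eq_or_ne v 0 with rfl | hv
    · rw [apply_zero]; linarith
    · rw [apply_of_ne_zero hv]
      nlinarith [mul_nonneg (sub_nonneg.mpr hv₂) (sub_nonneg.mpr hqB)]

lemma isMinOn_Icc_neg_iff :
    IsMinOn (hardThresholdObjective s q) (Icc (-B) B) (-u) ↔
      IsMinOn (hardThresholdObjective s (-q)) (Icc (-B) B) u := by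
  rw [isMinOn_iff, isMinOn_iff, neg_surjective.forall]
  refine forall_congr' fun v => ?_
  simp only [apply_neg, mem_Icc, neg_le_neg_iff, neg_le]
  rw [and_comm]

lemma isMinOn_Icc_left_iff (hs : 0 ≤ s) (hB : 0 < B) :
    IsMinOn (hardThresholdObjective s q) (Icc (-B) B) (-B) ↔ max B (B / 2 + s / B) ≤ -q := by
  rw [isMinOn_Icc_neg_iff, isMinOn_Icc_right_iff hs hB]

lemma isMinOn_Icc_iff_of_abs_lt (hu₀ : 0 < |u|) (huB : |u| < B) :
    IsMinOn (hardThresholdObjective s q) (Icc (-B) B) u ↔ u = q ∧ √(2 * s) ≤ |q| := by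
  have hB : 0 < B := hu₀.trans huB
  rw [isMinOn_iff_of_ne_zero (abs_pos.mp hu₀) (Icc_mem_nhds (abs_lt.mp huB).1 (abs_lt.mp huB).2)
    ⟨by linarith, hB.le⟩, sqrt_two_mul_le_abs_iff]

theorem mem_Icc_and_isMinOn_Icc_iff (hs : 0 ≤ s) (hB : 0 < B) :
    u ∈ Icc (-B) B ∧ IsMinOn (hardThresholdObjective s q) (Icc (-B) B) u ↔
      (u = -B ∧ max B (B / 2 + s / B) ≤ -q) ∨
      (u = B ∧ max B (B / 2 + s / B) ≤ q) ∨
      (u = 0 ∧ ((B ≤ √(2 * s) ∧ |q| ≤ B / 2 + s / B) ∨ (√(2 * s) ≤ B ∧ |q| ≤ √(2 * s)))) ∨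
      (0 < |u| ∧ |u| < B ∧ u = q ∧ √(2 * s) ≤ |q| ∧ |q| ≤ B) := by
  constructor
  · rintro ⟨huK, h⟩
    rcases eq_or_ne u 0 with rfl | hu₀
    · exact Or.inr <| Or.inr <| Or.inl ⟨rfl, (isMinOn_Icc_zero_iff hs hB).mp h⟩
    rcases (abs_le.mpr huK).lt_or_eq with huB | huB
    · obtain ⟨rfl, hq⟩ := (isMinOn_Icc_iff_of_abs_lt (abs_pos.mpr hu₀) huB).mp h
      exact Or.inr <| Or.inr <| Or.inr ⟨abs_pos.mpr hu₀, huB, rfl, hq, huB.le⟩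
    · rcases (abs_eq hB.le).mp huB with rfl | rfl
      · exact Or.inr <| Or.inl ⟨rfl, (isMinOn_Icc_right_iff hs hB).mp h⟩
      · exact Or.inl ⟨rfl, (isMinOn_Icc_left_iff hs hB).mp h⟩
  · rintro (⟨rfl, h⟩ | ⟨rfl, h⟩ | ⟨rfl, h⟩ | ⟨hu₀, huB, rfl, hq, -⟩)
    · exact ⟨⟨le_rfl, by linarith⟩, (isMinOn_Icc_left_iff hs hB).mpr h⟩
    · exact ⟨⟨by linarith, le_rfl⟩, (isMinOn_Icc_right_iff hs hB).mpr h⟩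
    · exact ⟨⟨by linarith, hB.le⟩, (isMinOn_Icc_zero_iff hs hB).mpr h⟩
    · exact ⟨abs_le.mp huB.le, (isMinOn_Icc_iff_of_abs_lt hu₀ huB).mpr ⟨rfl, hq⟩⟩

end hardThresholdObjective

open hardThresholdObjective

theorem L_stationarity_characterization_general (β L α : ℝ) (b : ℝ≥0∞)
    (hβ : 0 < β) (hb : 0 < b) (hLα : 0 < L + α)
    (g u : ℝ) :
    u ∈ Hsb (β / (L + α)) b ((L * u - g) / (L + α)) ↔
      (if b = ⊤ then
        (u = 0 ∧ |g| ≤ (L + α) * Real.sqrt (2 * (β / (L + α)))) ∨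
        (u ≠ 0 ∧ α * u = -g ∧
          Real.sqrt (2 * (β / (L + α))) ≤ |(L * u - g) / (L + α)|)
      else
        (u = -b.toReal ∧
          (L + α) * max b.toReal (b.toReal / 2 + (β / (L + α)) / b.toReal) - L * b.toReal
            ≤ g) ∨
        (u = b.toReal ∧
          g ≤ -((L + α) * max b.toReal (b.toReal / 2 + (β / (L + α)) / b.toReal)
            - L * b.toReal)) ∨
        (u = 0 ∧
          ((b.toReal ≤ Real.sqrt (2 * (β / (L + α))) ∧
            |g| ≤ (L + α) * (b.toReal / 2 + (β / (L + α)) / b.toReal)) ∨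
           (Real.sqrt (2 * (β / (L + α))) ≤ b.toReal ∧
            |g| ≤ (L + α) * Real.sqrt (2 * (β / (L + α)))))) ∨
        (0 < |u| ∧ |u| < b.toReal ∧ α * u = -g ∧
          Real.sqrt (2 * (β / (L + α))) ≤ |(L * u - g) / (L + α)| ∧
          |(L * u - g) / (L + α)| ≤ b.toReal)) := by
  have hs : 0 ≤ β / (L + α) := by positivity
  have h_fixed : u = (L * u - g) / (L + α) ↔ α * u = -g := by
    rw [eq_div_iff hLα.ne']; constructor <;> intro h <;> linarith
  have h_abs_zero (x : ℝ) : |(L * 0 - g) / (L + α)| ≤ x ↔ |g| ≤ (L + α) * x := by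
    rw [mul_zero, zero_sub, abs_div, abs_neg, abs_of_pos hLα, div_le_iff₀' hLα]
  rw [mem_Hsb_iff]
  split_ifs with hb_top
  · subst hb_top
    rw [setOf_ofReal_abs_le_top, isMinOn_univ_iff hs]
    simp only [mem_univ, true_and]
    exact or_congr (and_congr_right fun hu => by rw [hu, h_abs_zero])
      (and_congr_right fun _ => and_congr_left' h_fixed)
  · rw [setOf_ofReal_abs_le_of_ne_top hb_top,
      mem_Icc_and_isMinOn_Icc_iff hs (ENNReal.toReal_pos hb.ne' hb_top)]
    refine or_congr (and_congr_right fun hu => ?_) <| or_congr (and_congr_right fun hu => ?_) <|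
      or_congr (and_congr_right fun hu => ?_) <|
      and_congr_right fun _ => and_congr_right fun _ => and_congr_left' h_fixed
    · rw [hu, ← neg_div, le_div_iff₀ hLα]; constructor <;> intro h <;> linarith
    · rw [hu, le_div_iff₀ hLα]; constructor <;> intro h <;> linarith
    · rw [hu, h_abs_zero, h_abs_zero]

/-- Characterization of `L`-stationary points (Lemma 3.17): `u` is a fixed point of the
constrained hard-thresholding step, i.e. `u ∈ H_{β/(L+α),b}((Lu - g)/(L+α))`, iff (with
`s = β/(L+α)`, `q = -(Lu-g)/(L+α)`) either `|u| = b` with the appropriate sign condition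
on `g`, or `u = 0` with the appropriate bound on `|g|`, or `0 < |u| < b` with `αu = -g`
and `|q| ∈ [√(2s), b]`. -/
theorem L_stationarity_characterization (β L α : ℝ) (b : ℝ≥0∞)
    (hβ : 0 < β) (hb : 0 < b) (hL : 0 ≤ L) (hα : 0 ≤ α) (hLα : 0 < L + α)
    (g u : ℝ) :
    u ∈ Hsb (β / (L + α)) b ((L * u - g) / (L + α)) ↔
      (if b = ⊤ then
        (u = 0 ∧ |g| ≤ (L + α) * Real.sqrt (2 * (β / (L + α)))) ∨
        (u ≠ 0 ∧ α * u = -g ∧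
          Real.sqrt (2 * (β / (L + α))) ≤ |(L * u - g) / (L + α)|)
      else
        (u = -b.toReal ∧
          (L + α) * max b.toReal (b.toReal / 2 + (β / (L + α)) / b.toReal) - L * b.toReal
            ≤ g) ∨
        (u = b.toReal ∧
          g ≤ -((L + α) * max b.toReal (b.toReal / 2 + (β / (L + α)) / b.toReal)
            - L * b.toReal)) ∨
        (u = 0 ∧
          ((b.toReal ≤ Real.sqrt (2 * (β / (L + α))) ∧
            |g| ≤ (L + α) * (b.toReal / 2 + (β / (L + α)) / b.toReal)) ∨
           (Real.sqrt (2 * (β / (L + α))) ≤ b.toReal ∧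
            |g| ≤ (L + α) * Real.sqrt (2 * (β / (L + α)))))) ∨
        (0 < |u| ∧ |u| < b.toReal ∧ α * u = -g ∧
          Real.sqrt (2 * (β / (L + α))) ≤ |(L * u - g) / (L + α)| ∧
          |(L * u - g) / (L + α)| ≤ b.toReal)) :=
  L_stationarity_characterization_general β L α b hβ hb hLα g u
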